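/- For every prime p, every m ∈ ℕ ∪ {∞}, every s ∈ ℂ with 0 < |s| < 1, and all x, y ∈ ℚ_p with x ≠ y, one has |Υ_s^{(m)}(x) − Υ_s^{(m)}(y)| ≤ (2/(1−|s|))·|s|^{v(x−y)}; equivalently, Υ_s^{(m)} is a Lipschitz map from (ℚ_p, |·|_p^{1/D_s}) to ℂ with Lipschitz constant 2/(1−|s|). -/

import Mathlib

open scoped ENNReal MeasureTheory

noncomputable section

/-- The digit expansion of `p`-adic numbers: `digit x n` is the coefficient of `pⁿ`
in the canonical expansion `x = Σ_{n ≥ v(x)} (digit x n)·pⁿ` with digits in `{0,…,p−1}`. -/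
structure PadicDigits (p : ℕ) [Fact p.Prime] : Type where
  digit : ℚ_[p] → ℤ → ℕ
  digit_lt : ∀ x n, digit x n < p
  digit_zero : ∀ n, digit 0 n = 0
  digit_eq_zero_of_lt : ∀ x : ℚ_[p], x ≠ 0 → ∀ n : ℤ, n < x.valuation → digit x n = 0
  digit_valuation_ne_zero : ∀ x : ℚ_[p], x ≠ 0 → digit x x.valuation ≠ 0
  expansion : ∀ x : ℚ_[p], x = ∑' n : ℤ, (digit x n : ℚ_[p]) * (p : ℚ_[p]) ^ n

variable {p : ℕ} [Fact p.Prime]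

/-- `χ_n^{(m)}(x) = exp((2πi/p) Σ_{k=0}^{m} x_{n−k} p^{−k})`, where `m ∈ ℕ ∪ {∞}`. -/
def chiFn (D : PadicDigits p) (m : ℕ∞) (x : ℚ_[p]) (n : ℤ) : ℂ :=
  Complex.exp (((2 * Real.pi / p *
      ∑' k : ℕ, if (k : ℕ∞) ≤ m then (D.digit x (n - k) : ℝ) / (p : ℝ) ^ k else 0 : ℝ) : ℂ)
    * Complex.I)

/-- `Υ_s^{(m)}(x) = Σ_{n<0} sⁿ(χ_n^{(m)}(x) − 1) + Σ_{n≥0} sⁿ χ_n^{(m)}(x)`. -/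
def Upsilon (D : PadicDigits p) (m : ℕ∞) (s : ℂ) (x : ℚ_[p]) : ℂ :=
  ∑' n : ℤ, s ^ n * (chiFn D m x n - if n < 0 then 1 else 0)

/-- `Δ_s^{(m)} = inf{ |Υ_s^{(m)}(x) − Υ_s^{(m)}(y)| : x, y ∈ ℚ_p, |x−y|_p = 1 }`. -/
def Delta (D : PadicDigits p) (m : ℕ∞) (s : ℂ) : ℝ :=
  sInf {r : ℝ | ∃ x y : ℚ_[p], ‖x - y‖ = 1 ∧
    r = ‖Upsilon D m s x - Upsilon D m s y‖}

/-- The scaling dimension `D_s = −1/log_p |s|`. -/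
def scalingDim (p : ℕ) (s : ℂ) : ℝ := -1 / Real.logb p ‖s‖

/-! ### Auxiliary lemmas -/

lemma PadicDigits.digit_bound (D : PadicDigits p) (x : ℚ_[p]) :
    ∃ N : ℤ, ∀ n : ℤ, n < N → D.digit x n = 0 := by
  by_cases hx : x = 0
  · exact ⟨0, fun n _ => hx ▸ D.digit_zero n⟩
  · exact ⟨x.valuation, fun n hn => D.digit_eq_zero_of_lt x hx n hn⟩

lemma abs_chiFn (D : PadicDigits p) (m : ℕ∞) (x : ℚ_[p]) (n : ℤ) :
    ‖chiFn D m x n‖ = 1 := by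
  rw [chiFn, Complex.norm_exp]
  simp [Complex.mul_re]

lemma chiFn_congr (D : PadicDigits p) (m : ℕ∞) (x y : ℚ_[p]) (n : ℤ)
    (h : ∀ k : ℤ, k ≤ n → D.digit x k = D.digit y k) :
    chiFn D m x n = chiFn D m y n := by
  have hsum : (∑' k : ℕ, if (k : ℕ∞) ≤ m then (D.digit x (n - k) : ℝ) / (p : ℝ) ^ k else 0)
      = ∑' k : ℕ, if (k : ℕ∞) ≤ m then (D.digit y (n - k) : ℝ) / (p : ℝ) ^ k else 0 := by
    refine tsum_congr fun k => ?_
    rw [h (n - k) (sub_le_self _ (Int.natCast_nonneg k))]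
  rw [chiFn, chiFn, hsum]

lemma chiFn_eq_one (D : PadicDigits p) (m : ℕ∞) (x : ℚ_[p]) (n : ℤ)
    (h : ∀ k : ℤ, k ≤ n → D.digit x k = 0) :
    chiFn D m x n = 1 := by
  have hsum : (∑' k : ℕ, if (k : ℕ∞) ≤ m then (D.digit x (n - k) : ℝ) / (p : ℝ) ^ k else 0)
      = 0 := by
    rw [← tsum_zero]
    refine tsum_congr fun k => ?_
    rw [h (n - k) (sub_le_self _ (Int.natCast_nonneg k))]
    simp
  rw [chiFn, hsum]
  simp

lemma norm_digit_term_le (d : ℕ) (n : ℤ) :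
    ‖(d : ℚ_[p]) * (p : ℚ_[p]) ^ n‖ ≤ (p : ℝ) ^ (-n) := by
  rw [norm_mul, Padic.norm_p_zpow]
  have h1 : ‖((d : ℤ) : ℚ_[p])‖ ≤ 1 := Padic.norm_int_le_one _
  have h2 : ((d : ℤ) : ℚ_[p]) = (d : ℚ_[p]) := by push_cast; ring
  rw [h2] at h1
  have hp : (0:ℝ) ≤ (p : ℝ) ^ (-n) :=
    zpow_nonneg (by exact_mod_cast Nat.zero_le p) _
  exact mul_le_of_le_one_left hp h1

lemma expansion_summable (D : PadicDigits p) (x : ℚ_[p]) :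
    Summable (fun n : ℤ => (D.digit x n : ℚ_[p]) * (p : ℚ_[p]) ^ n) := by
  obtain ⟨N, hN⟩ := D.digit_bound x
  have hp1 : (1:ℝ) < p := by exact_mod_cast (Fact.out : p.Prime).one_lt
  apply NonarchimedeanAddGroup.summable_of_tendsto_cofinite_zero
  rw [Metric.tendsto_nhds]
  intro ε hε
  rw [Filter.eventually_cofinite]
  obtain ⟨k, hk⟩ := exists_pow_lt_of_lt_one hε
    (show (p:ℝ)⁻¹ < 1 from inv_lt_one_of_one_lt₀ hp1)
  have hk' : (p:ℝ) ^ (-(k:ℤ)) < ε := by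
    rwa [zpow_neg, zpow_natCast, ← inv_pow]
  apply Set.Finite.subset (Set.finite_Icc N (k:ℤ))
  intro n hn
  simp only [Set.mem_setOf_eq, not_lt, dist_zero_right] at hn
  have hnn : ε ≤ ‖(D.digit x n : ℚ_[p]) * (p : ℚ_[p]) ^ n‖ := hn
  constructor
  · by_contra hlt
    push_neg at hlt
    rw [hN n hlt] at hnn
    simp at hnn
    linarith
  · by_contra hlt
    push_neg at hlt
    have h1 : ε ≤ (p:ℝ) ^ (-n) := hnn.trans (norm_digit_term_le _ _)
    have h2 : (p:ℝ) ^ (-n) ≤ (p:ℝ) ^ (-(k:ℤ)) :=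
      zpow_le_zpow_right₀ hp1.le (by omega)
    linarith

open IsUltrametricDist in
lemma norm_tsum_le_padic {f : ℤ → ℚ_[p]} (hf : Summable f) {C : ℝ} (hC : 0 ≤ C)
    (h : ∀ n, ‖f n‖ ≤ C) : ‖∑' n, f n‖ ≤ C := by
  refine le_of_tendsto' hf.hasSum.norm (fun s => ?_)
  exact norm_sum_le_of_forall_le_of_nonneg hC (fun i _ => h i)

/-- Digits of `x` and `y` agree below the valuation of `x - y`. -/
lemma digit_eq_of_lt_val (D : PadicDigits p) (x y : ℚ_[p]) (hxy : x ≠ y) :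
    ∀ n : ℤ, n < (x - y).valuation → D.digit x n = D.digit y n := by
  have hp1 : (1:ℝ) < p := by exact_mod_cast (Fact.out : p.Prime).one_lt
  have hz : x - y ≠ 0 := sub_ne_zero.mpr hxy
  set v := (x - y).valuation with hv
  obtain ⟨Nx, hNx⟩ := D.digit_bound x
  obtain ⟨Ny, hNy⟩ := D.digit_bound y
  set N0 : ℤ := min (min Nx Ny) v with hN0
  have hsx := expansion_summable D x
  have hsy := expansion_summable D y
  set c : ℤ → ℚ_[p] :=
    fun n => (D.digit x n : ℚ_[p]) * (p:ℚ_[p]) ^ n - (D.digit y n : ℚ_[p]) * (p:ℚ_[p]) ^ n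
    with hc
  have hsc : Summable c := hsx.sub hsy
  have hzc : x - y = ∑' n, c n := by
    rw [hc, Summable.tsum_sub hsx hsy, ← D.expansion x, ← D.expansion y]
  have hnormz : ‖x - y‖ = (p:ℝ) ^ (-v) := Padic.norm_eq_zpow_neg_valuation hz
  have main : ∀ j : ℕ, ∀ n : ℤ, n < v → n < N0 + j → D.digit x n = D.digit y n := by
    intro j
    induction j with
    | zero =>
      intro n hnv hn
      rw [hNx n (by omega), hNy n (by omega)]
    | succ j ih =>
      intro n hnv hn
      by_cases hn' : n < N0 + j
      · exact ih n hnv hn'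
      have H : ∀ k : ℤ, k < n → D.digit x k = D.digit y k := by
        intro k hk
        exact ih k (hk.trans hnv) (by omega)
      have hck : ∀ k : ℤ, k < n → c k = 0 := by
        intro k hk
        rw [hc]
        simp only [H k hk, sub_self]
      have hsplit := Summable.tsum_eq_add_tsum_ite hsc n
      -- summability of the rest
      have h1 : Summable (fun k : ℤ => if k = n then c k else 0) :=
        summable_of_ne_finset_zero (s := {n}) (fun b hb => if_neg (by simpa using hb))
      have hrs : Summable (fun k : ℤ => if k = n then 0 else c k) := by
        refine (hsc.sub h1).congr fun k => ?_
        by_cases hk : k = n <;> simp [hk]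
      -- bound on the rest
      have hrest : ‖∑' k : ℤ, if k = n then 0 else c k‖ ≤ (p:ℝ) ^ (-(n+1)) := by
        refine norm_tsum_le_padic hrs (zpow_nonneg (by positivity) _) (fun k => ?_)
        by_cases hk : k = n
        · simp [hk, zpow_nonneg (show (0:ℝ) ≤ p by positivity)]
        rcases lt_or_gt_of_ne hk with hlt | hgt
        · rw [if_neg hk, hck k hlt]
          simp [zpow_nonneg (show (0:ℝ) ≤ p by positivity)]
        · rw [if_neg hk, hc]
          have hmax : ‖(D.digit x k : ℚ_[p]) * (p:ℚ_[p]) ^ k -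
              (D.digit y k : ℚ_[p]) * (p:ℚ_[p]) ^ k‖ ≤ (p:ℝ) ^ (-k) := by
            rw [sub_eq_add_neg]
            refine (IsUltrametricDist.norm_add_le_max _ _).trans (max_le ?_ ?_)
            · exact norm_digit_term_le _ _
            · rw [norm_neg]; exact norm_digit_term_le _ _
          exact hmax.trans (zpow_le_zpow_right₀ hp1.le (by omega))
      have hzle : ‖x - y‖ ≤ (p:ℝ) ^ (-(n+1)) := by
        rw [hnormz]
        exact zpow_le_zpow_right₀ hp1.le (by omega)
      -- c n = (x - y) - rest
      have hcn : c n = (x - y) - ∑' k : ℤ, if k = n then 0 else c k := by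
        rw [hzc, hsplit]; ring
      have hcnle : ‖c n‖ ≤ (p:ℝ) ^ (-(n+1)) := by
        rw [hcn, sub_eq_add_neg]
        refine (IsUltrametricDist.norm_add_le_max _ _).trans (max_le hzle ?_)
        rwa [norm_neg]
      -- extract the digit difference
      have hfact : c n = (((D.digit x n : ℤ) - (D.digit y n : ℤ) : ℤ) : ℚ_[p])
          * (p:ℚ_[p]) ^ n := by
        rw [hc]; push_cast; ring
      have hnormc : ‖c n‖ = ‖(((D.digit x n : ℤ) - (D.digit y n : ℤ) : ℤ) : ℚ_[p])‖
          * (p:ℝ) ^ (-n) := by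
        rw [hfact, norm_mul, Padic.norm_p_zpow]
      have hppos : (0:ℝ) < (p:ℝ) ^ (-n) := zpow_pos (by positivity) _
      have hlt1 : ‖(((D.digit x n : ℤ) - (D.digit y n : ℤ) : ℤ) : ℚ_[p])‖ < 1 := by
        rw [hnormc] at hcnle
        have hsplitp : (p:ℝ) ^ (-(n+1)) = (p:ℝ)⁻¹ * (p:ℝ) ^ (-n) := by
          rw [← zpow_neg_one, ← zpow_add₀ (show (p:ℝ) ≠ 0 by positivity)]
          ring_nf
        rw [hsplitp] at hcnle
        have h3 : ‖(((D.digit x n : ℤ) - (D.digit y n : ℤ) : ℤ) : ℚ_[p])‖ ≤ (p:ℝ)⁻¹ :=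
          le_of_mul_le_mul_right (by linarith [hcnle]) hppos
        exact lt_of_le_of_lt h3 (inv_lt_one_of_one_lt₀ hp1)
      have hdvd : (p:ℤ) ∣ (D.digit x n : ℤ) - (D.digit y n : ℤ) :=
        (Padic.norm_intCast_lt_one_iff).mp hlt1
      have habs : |(D.digit x n : ℤ) - (D.digit y n : ℤ)| < (p:ℤ) := by
        have h1 := D.digit_lt x n
        have h2 := D.digit_lt y n
        rw [abs_lt]
        omega
      have := Int.eq_zero_of_abs_lt_dvd hdvd habs
      omega
  intro n hn
  exact main (n - N0 + 1).toNat n hn (by omega)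

/-- The geometric majorant over `ℤ` supported on `[N, ∞)`. -/
lemma key_hasSum_majorant {a : ℝ} (ha0 : 0 < a) (ha1 : a < 1) (N : ℤ) :
    HasSum (fun n : ℤ => if N ≤ n then 2 * a ^ n else 0) (2 / (1 - a) * a ^ N) := by
  have hinj : Function.Injective (fun k : ℕ => N + (k:ℤ)) := by
    intro a b h
    simpa using h
  have hrange : ∀ n : ℤ, n ∉ Set.range (fun k : ℕ => N + (k:ℤ)) →
      (if N ≤ n then 2 * a ^ n else 0) = 0 := by
    intro n hn
    rw [if_neg]
    intro hNn
    exact hn ⟨(n - N).toNat, by show N + ((n - N).toNat : ℤ) = n; omega⟩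
  rw [← Function.Injective.hasSum_iff hinj hrange]
  have h1 : HasSum (fun k : ℕ => (2 * a ^ N) * a ^ k) ((2 * a ^ N) * (1 - a)⁻¹) :=
    (hasSum_geometric_of_lt_one ha0.le ha1).mul_left _
  have heq : (fun k : ℕ => (if N ≤ N + (k:ℤ) then 2 * a ^ (N + (k:ℤ)) else 0))
      = fun k : ℕ => (2 * a ^ N) * a ^ k := by
    funext k
    rw [if_pos (by omega), zpow_add₀ (ne_of_gt ha0), zpow_natCast]
    ring
  have hval : (2 * a ^ N) * (1 - a)⁻¹ = 2 / (1 - a) * a ^ N := by ring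
  rw [show ((fun n : ℤ => if N ≤ n then 2 * a ^ n else 0) ∘ (fun k : ℕ => N + (k:ℤ)))
      = fun k : ℕ => (2 * a ^ N) * a ^ k from heq, ← hval]
  exact h1

/-- Main analytic bound: a series over `ℤ` supported on `[N, ∞)` with terms bounded by
`2·aⁿ` is summable with sum bounded by `2/(1−a)·a^N`. -/
lemma key_bound {a : ℝ} (ha0 : 0 < a) (ha1 : a < 1) (g : ℤ → ℂ) (N : ℤ)
    (h0 : ∀ n : ℤ, n < N → g n = 0) (hb : ∀ n : ℤ, ‖g n‖ ≤ 2 * a ^ n) :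
    Summable g ∧ ‖∑' n : ℤ, g n‖ ≤ 2 / (1 - a) * a ^ N := by
  have hmaj := key_hasSum_majorant ha0 ha1 N
  have hle : ∀ n : ℤ, ‖g n‖ ≤ (if N ≤ n then 2 * a ^ n else 0) := by
    intro n
    by_cases hn : N ≤ n
    · simpa [hn] using hb n
    · simp [hn, h0 n (not_le.mp hn)]
  have hsn : Summable fun n : ℤ => ‖g n‖ :=
    Summable.of_nonneg_of_le (fun n => norm_nonneg _) hle hmaj.summable
  have hg : Summable g := hsn.of_norm
  refine ⟨hg, ?_⟩
  calc ‖∑' n : ℤ, g n‖ ≤ ∑' n : ℤ, ‖g n‖ := norm_tsum_le_tsum_norm hsn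
    _ ≤ ∑' n : ℤ, (if N ≤ n then 2 * a ^ n else 0) := Summable.tsum_le_tsum hle hsn hmaj.summable
    _ = 2 / (1 - a) * a ^ N := hmaj.tsum_eq

lemma upsilon_summand (D : PadicDigits p) (m : ℕ∞) {s : ℂ}
    (hs0 : 0 < ‖s‖) (hs1 : ‖s‖ < 1) (x : ℚ_[p]) :
    Summable (fun n : ℤ => s ^ n * (chiFn D m x n - if n < 0 then 1 else 0)) := by
  obtain ⟨N, hN⟩ := D.digit_bound x
  refine (key_bound hs0 hs1 _ (min N 0) ?_ ?_).1
  · intro n hn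
    have hn0 : n < 0 := lt_of_lt_of_le hn (min_le_right _ _)
    have hchi : chiFn D m x n = 1 :=
      chiFn_eq_one D m x n (fun k hk => hN k (by
        have : n < N := lt_of_lt_of_le hn (min_le_left _ _)
        omega))
    simp [hchi, hn0]
  · intro n
    rw [norm_mul, norm_zpow]
    have h2 : ‖chiFn D m x n - if n < 0 then 1 else 0‖ ≤ 2 := by
      refine (norm_sub_le _ _).trans ?_
      have hchi : ‖chiFn D m x n‖ = 1 := by
        rw [abs_chiFn]
      have hite : ‖(if n < 0 then (1:ℂ) else 0)‖ ≤ 1 := by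
        by_cases hn : n < 0 <;> simp [hn]
      linarith
    have hnn : (0:ℝ) ≤ ‖s‖ ^ n := zpow_nonneg hs0.le _
    calc ‖s‖ ^ n * ‖chiFn D m x n - if n < 0 then 1 else 0‖
        ≤ ‖s‖ ^ n * 2 := mul_le_mul_of_nonneg_left h2 hnn
      _ = 2 * ‖s‖ ^ n := by ring

/-- For `0 < |s| < 1` and `x ≠ y` in `ℚ_p`:
`|Υ_s^{(m)}(x) − Υ_s^{(m)}(y)| ≤ (2/(1−|s|))·|s|^{v(x−y)}`; equivalently, `Υ_s^{(m)}` is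
Lipschitz from `(ℚ_p, |·|_p^{1/D_s})` to `ℂ` with Lipschitz constant `2/(1−|s|)`. -/
theorem upsilon_lipschitz {p : ℕ} [Fact p.Prime] (D : PadicDigits p) (m : ℕ∞)
    (s : ℂ) (hs0 : 0 < ‖s‖) (hs1 : ‖s‖ < 1)
    (x y : ℚ_[p]) (hxy : x ≠ y) :
    ‖Upsilon D m s x - Upsilon D m s y‖
        ≤ 2 / (1 - ‖s‖) * ‖s‖ ^ ((x - y).valuation) ∧
      ‖Upsilon D m s x - Upsilon D m s y‖
        ≤ 2 / (1 - ‖s‖) * ‖x - y‖ ^ (1 / scalingDim p s) := by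
  have hp1 : (1:ℝ) < p := by exact_mod_cast (Fact.out : p.Prime).one_lt
  have hz : x - y ≠ 0 := sub_ne_zero.mpr hxy
  set a := ‖s‖ with ha
  set v := (x - y).valuation with hv
  have hgx := upsilon_summand D m hs0 hs1 x
  have hgy := upsilon_summand D m hs0 hs1 y
  have hdiff : Upsilon D m s x - Upsilon D m s y
      = ∑' n : ℤ, (s ^ n * (chiFn D m x n - if n < 0 then 1 else 0)
          - s ^ n * (chiFn D m y n - if n < 0 then 1 else 0)) := by
    rw [Upsilon, Upsilon, ← Summable.tsum_sub hgx hgy]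
  have hkey := key_bound hs0 hs1
    (fun n : ℤ => s ^ n * (chiFn D m x n - if n < 0 then 1 else 0)
      - s ^ n * (chiFn D m y n - if n < 0 then 1 else 0)) v
    (by
      intro n hn
      have hchi : chiFn D m x n = chiFn D m y n :=
        chiFn_congr D m x y n (fun k hk =>
          digit_eq_of_lt_val D x y hxy k (lt_of_le_of_lt hk hn))
      beta_reduce
      rw [hchi]
      ring)
    (by
      intro n
      have hfact : s ^ n * (chiFn D m x n - if n < 0 then 1 else 0)
          - s ^ n * (chiFn D m y n - if n < 0 then 1 else 0)
          = s ^ n * (chiFn D m x n - chiFn D m y n) := by ring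
      beta_reduce
      rw [hfact, norm_mul, norm_zpow]
      have h2 : ‖chiFn D m x n - chiFn D m y n‖ ≤ 2 := by
        refine (norm_sub_le _ _).trans ?_
        rw [abs_chiFn, abs_chiFn]
        norm_num
      have hnn : (0:ℝ) ≤ a ^ n := zpow_nonneg hs0.le _
      calc a ^ n * ‖chiFn D m x n - chiFn D m y n‖
          ≤ a ^ n * 2 := mul_le_mul_of_nonneg_left h2 hnn
        _ = 2 * a ^ n := by ring)
  have hfirst : ‖Upsilon D m s x - Upsilon D m s y‖
      ≤ 2 / (1 - a) * a ^ v := by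
    rw [hdiff]
    exact hkey.2
  refine ⟨hfirst, ?_⟩
  -- now rewrite `a ^ v` as `‖x - y‖ ^ (1 / scalingDim p s)`
  have hL : Real.logb p a < 0 :=
    Real.logb_neg hp1 hs0 hs1
  have hLne : Real.logb p a ≠ 0 := ne_of_lt hL
  have hinv : 1 / scalingDim p s = -Real.logb p a := by
    rw [scalingDim, ← ha]
    field_simp
  have hnorm : ‖x - y‖ = (p:ℝ) ^ (-v) := Padic.norm_eq_zpow_neg_valuation hz
  have hp0 : (0:ℝ) < p := by positivity
  have hrw : ‖x - y‖ ^ (1 / scalingDim p s) = a ^ v := by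
    rw [hinv, hnorm]
    rw [show ((p:ℝ) ^ (-v)) = (p:ℝ) ^ ((-v : ℤ) : ℝ) from (Real.rpow_intCast _ _).symm]
    rw [← Real.rpow_mul hp0.le]
    have hexp : ((-v : ℤ) : ℝ) * -Real.logb p a = Real.logb p a * (v:ℝ) := by
      push_cast; ring
    rw [hexp, Real.rpow_mul hp0.le, Real.rpow_logb hp0 (ne_of_gt hp1) hs0,
      Real.rpow_intCast]
  rw [hrw]
  exact hfirst
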